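/- Let R be a commutative ring, S a multiplicative subset of R, and f : M → N a u-S-isomorphism of R-modules (both ker f and coker f are annihilated by elements of S). Then M is u-S-injective if and only if N is u-S-injective. -/

import Mathlib

open CategoryTheory

universe u


section OpLinear
variable {R : Type*} [Semiring R] {C : Type*} [Category C] [Preadditive C]
  [CategoryTheory.Linear R C]

instance opHomModule (X Y : Cᵒᵖ) : Module R (X ⟶ Y) where
  smul r f := (r • f.unop).op
  one_smul f := Quiver.Hom.unop_inj (one_smul _ _)
  mul_smul r s f := Quiver.Hom.unop_inj (mul_smul r s f.unop)
  smul_zero r := Quiver.Hom.unop_inj (smul_zero r)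
  smul_add r f g := Quiver.Hom.unop_inj (smul_add r f.unop g.unop)
  add_smul r s f := Quiver.Hom.unop_inj (add_smul r s f.unop)
  zero_smul f := Quiver.Hom.unop_inj (zero_smul R f.unop)

@[simp] lemma unop_smul' {X Y : Cᵒᵖ} (r : R) (f : X ⟶ Y) : (r • f).unop = r • f.unop := rfl

instance opLinear : CategoryTheory.Linear R Cᵒᵖ where
  homModule X Y := opHomModule X Y
  smul_comp X Y Z r f g := Quiver.Hom.unop_inj (CategoryTheory.Linear.comp_smul _ _ _ g.unop r f.unop)
  comp_smul X Y Z f r g := Quiver.Hom.unop_inj (CategoryTheory.Linear.smul_comp _ _ _ r g.unop f.unop)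

end OpLinear

section HomSmul
variable {R : Type*} [Semiring R] {C : Type*} [Category C] [Preadditive C]
  [CategoryTheory.Linear R C] {ι : Type*} {cs : ComplexShape ι}

lemma homologyMap_smul'' {K L : HomologicalComplex C cs} (φ : K ⟶ L) (r : R) (i : ι)
    [K.HasHomology i] [L.HasHomology i] :
    HomologicalComplex.homologyMap (r • φ) i = r • HomologicalComplex.homologyMap φ i := by
  dsimp only [HomologicalComplex.homologyMap]
  have : (HomologicalComplex.shortComplexFunctor C cs i).map (r • φ) =
      r • (HomologicalComplex.shortComplexFunctor C cs i).map φ := rfl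
  rw [this, ShortComplex.homologyMap_smul]
  rfl

end HomSmul

section ExtSmul
variable (R : Type u) [CommRing R]

lemma Ext_map_eq (n : ℕ) (Z Y Y' : ModuleCat.{u} R) (h : Y ⟶ Y') :
    ((Ext R (ModuleCat.{u} R) n).obj (Opposite.op Z)).map h =
      ((NatTrans.leftDerived
        (NatTrans.rightOp ((linearYoneda R (ModuleCat.{u} R)).map h)) n).app Z).unop := rfl

lemma Ext_map_smul (r : R) (n : ℕ) (Z Y : ModuleCat.{u} R) :
    ((Ext R (ModuleCat.{u} R) n).obj (Opposite.op Z)).map (r • 𝟙 Y) =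
      r • 𝟙 (((Ext R (ModuleCat.{u} R) n).obj (Opposite.op Z)).obj Y) := by
  have Q : ProjectiveResolution Z := ProjectiveResolution.of Z
  set F := ((linearYoneda R (ModuleCat.{u} R)).obj Y).rightOp with hF
  set α := NatTrans.rightOp ((linearYoneda R (ModuleCat.{u} R)).map (r • 𝟙 Y)) with hα
  rw [Ext_map_eq, ProjectiveResolution.leftDerived_app_eq (α := α) Q n]
  have hmid : (NatTrans.mapHomologicalComplex α (ComplexShape.down ℕ)).app Q.complex =
      r • 𝟙 ((F.mapHomologicalComplex (ComplexShape.down ℕ)).obj Q.complex) := by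
    ext i
    apply Quiver.Hom.unop_inj
    ext (φ : _ ⟶ Y)
    simp [hα, Linear.comp_smul]
    rfl
  rw [hmid]
  have h2 : (HomologicalComplex.homologyFunctor (ModuleCat.{u} R)ᵒᵖ (ComplexShape.down ℕ) n).map
      (r • 𝟙 ((F.mapHomologicalComplex (ComplexShape.down ℕ)).obj Q.complex)) =
      r • 𝟙 _ := by
    have := homologyMap_smul'' (R := R)
      (𝟙 ((F.mapHomologicalComplex (ComplexShape.down ℕ)).obj Q.complex)) r n
    dsimp [HomologicalComplex.homologyFunctor]
    rw [this, HomologicalComplex.homologyMap_id]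
    rfl
  rw [h2, Linear.smul_comp, Category.id_comp, Linear.comp_smul, Iso.hom_inv_id]
  rfl

end ExtSmul


lemma aux_transfer {R : Type u} [CommRing R] (F : ModuleCat.{u} R ⥤ ModuleCat.{u} R)
    {A B : ModuleCat.{u} R} (a b : R) (u : A ⟶ B) (v : B ⟶ A)
    (huv : F.map u ≫ F.map v = b • 𝟙 (F.obj A))
    (h : ∀ y : F.obj B, a • y = 0) (x : F.obj A) : (a * b) • x = 0 := by
  have e1 : F.map v (F.map u x) = b • x := by
    have := congrArg (fun (φ : F.obj A ⟶ F.obj A) => φ x) huv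
    dsimp at this
    rw [this]
  have e2 : (a * b) • x = F.map v (a • F.map u x) := by
    rw [map_smul, e1, mul_smul, smul_comm]
  rw [e2, h (F.map u x), map_zero]



/-- The `n`-th Ext group of two `A`-modules, as an `A`-module. -/
noncomputable def extMod (A : Type u) [CommRing A] (n : ℕ) (M N : ModuleCat.{u} A) :
    ModuleCat A :=
  ((Ext A (ModuleCat.{u} A) n).obj (Opposite.op M)).obj N

/-- If `f : M → N` is a `u`-`S`-isomorphism of `R`-modules (its kernel and cokernel are
annihilated by elements of `S`), then `M` is `u`-`S`-injective if and only if `N` is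
`u`-`S`-injective. -/
theorem uS_injective_iff_of_uS_isomorphism
    (R : Type u) [CommRing R] (S : Submonoid R)
    (M N : Type u) [AddCommGroup M] [Module R M] [AddCommGroup N] [Module R N]
    (f : M →ₗ[R] N)
    (hker : ∃ s ∈ S, ∀ x ∈ LinearMap.ker f, s • x = 0)
    (hcoker : ∃ s ∈ S, ∀ y : N ⧸ LinearMap.range f, s • y = 0) :
    (∀ P : ModuleCat.{u} R, ∃ s ∈ S,
        ∀ x : extMod R 1 P (ModuleCat.of R M), s • x = 0) ↔
    (∀ P : ModuleCat.{u} R, ∃ s ∈ S,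
        ∀ x : extMod R 1 P (ModuleCat.of R N), s • x = 0) := by
  obtain ⟨s₁, hs₁, h₁⟩ := hker
  obtain ⟨s₂, hs₂, h₂⟩ := hcoker
  have hr : ∀ y : N, ∃ x : M, f x = s₂ • y := by
    intro y
    have h3 := h₂ (Submodule.Quotient.mk y)
    rw [← Submodule.Quotient.mk_smul, Submodule.Quotient.mk_eq_zero] at h3
    exact h3
  choose g0 hg0 using hr
  have key : ∀ x y : M, f x = f y → s₁ • x = s₁ • y := by
    intro x y h
    have hm : x - y ∈ LinearMap.ker f := by
      simp [LinearMap.mem_ker, map_sub, h]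
    have := h₁ _ hm
    rw [smul_sub, sub_eq_zero] at this
    exact this
  let g : N →ₗ[R] M :=
  { toFun := fun y => s₁ • g0 y
    map_add' := by
      intro y z
      have h : f (g0 (y + z)) = f (g0 y + g0 z) := by
        rw [hg0, map_add, hg0, hg0, smul_add]
      have := key _ _ h
      show s₁ • g0 (y + z) = s₁ • g0 y + s₁ • g0 z
      rw [this, smul_add]
    map_smul' := by
      intro r y
      have h : f (g0 (r • y)) = f (r • g0 y) := by
        rw [hg0, map_smul, hg0, smul_comm]
      have := key _ _ h
      show s₁ • g0 (r • y) = (RingHom.id R) r • (s₁ • g0 y)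
      rw [this, RingHom.id_apply, smul_comm] }
  have hgf : ∀ x : M, g (f x) = (s₁ * s₂) • x := by
    intro x
    have h : f (g0 (f x)) = f (s₂ • x) := by rw [hg0, map_smul]
    have := key _ _ h
    show s₁ • g0 (f x) = (s₁ * s₂) • x
    rw [this, smul_smul]
  have hfg : ∀ y : N, f (g y) = (s₁ * s₂) • y := by
    intro y
    show f (s₁ • g0 y) = (s₁ * s₂) • y
    rw [map_smul, hg0, smul_smul]
  set Mm := ModuleCat.of R M
  set Nn := ModuleCat.of R N
  let fc : Mm ⟶ Nn := ModuleCat.ofHom f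
  let gc : Nn ⟶ Mm := ModuleCat.ofHom g
  have c1 : fc ≫ gc = (s₁ * s₂) • 𝟙 Mm := by
    refine ModuleCat.hom_ext (LinearMap.ext ?_)
    intro x
    exact hgf x
  have c2 : gc ≫ fc = (s₁ * s₂) • 𝟙 Nn := by
    refine ModuleCat.hom_ext (LinearMap.ext ?_)
    intro y
    exact hfg y
  constructor
  · intro hM P
    obtain ⟨s, hs, h⟩ := hM P
    refine ⟨s * (s₁ * s₂), mul_mem hs (mul_mem hs₁ hs₂), ?_⟩
    intro x
    refine aux_transfer ((Ext R (ModuleCat.{u} R) 1).obj (Opposite.op P)) s (s₁ * s₂) gc fc ?_ h x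
    rw [← Functor.map_comp, c2, Ext_map_smul]
  · intro hN P
    obtain ⟨s, hs, h⟩ := hN P
    refine ⟨s * (s₁ * s₂), mul_mem hs (mul_mem hs₁ hs₂), ?_⟩
    intro x
    refine aux_transfer ((Ext R (ModuleCat.{u} R) 1).obj (Opposite.op P)) s (s₁ * s₂) fc gc ?_ h x
    rw [← Functor.map_comp, c1, Ext_map_smul]
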